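/- arXiv:2409.17582 — 8 statements merged into one kernel-verified Lean document; each statement's English description precedes it below -/
import Mathlib

section
/- For every real θ with 0 < θ ≤ 1/2, one has φ(θ) ≤ tan((π/2)·θ) < (π/2)·φ(θ); and for every real θ with 1/2 < θ < 1, one has (2/π)·φ(θ) < tan((π/2)·θ) < φ(θ). -/
/-!
Put `x = (π/2)θ`, so that `φ(θ) = 2x/(π - 2x)`. On `0 < x ≤ π/4` the upper bound
`tan x < πx/(π - 2x)` follows from `sin x < x` and `cos x > 1 - x²/2`. The lower bound
`2x/(π - 2x) < tan x` follows from `x < tan x` for `x ≤ (π - 2)/2`, and from the tangent line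
of `tan` at `π/4` beyond that point. The range `1/2 < θ < 1` reduces to the first one through
`tan((π/2)θ) = (tan((π/2)(1 - θ)))⁻¹` and `φ(θ) = (φ(1 - θ))⁻¹`.
-/

open Real

namespace Real

lemma tan_lt_pi_mul_div_pi_sub_two_mul {x : ℝ} (hx₀ : 0 < x) (hx : x ≤ π / 4) :
    tan x < π * x / (π - 2 * x) := by
  have hd : 0 < π - 2 * x := by linarith [pi_pos]
  have hcos : 0 < cos x := cos_pos_of_mem_Ioo ⟨by linarith, by linarith⟩
  have hπx : π * x ≤ 4 := by nlinarith [pi_pos, pi_lt_four]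
  rw [tan_eq_sin_div_cos, div_lt_div_iff₀ hcos hd]
  calc sin x * (π - 2 * x) < x * (π - 2 * x) := mul_lt_mul_of_pos_right (sin_lt hx₀) hd
    _ ≤ π * x * (1 - x ^ 2 / 2) := by nlinarith
    _ < π * x * cos x :=
      mul_lt_mul_of_pos_left (one_sub_sq_div_two_lt_cos hx₀.ne') (by positivity)

lemma one_add_two_mul_sub_pi_div_four_lt_tan {x : ℝ} (hx₀ : 0 < x) (hx : x < π / 4) :
    1 + 2 * (x - π / 4) < tan x := by
  set v := π / 4 - x with hv
  have hv₀ : 0 < v := by linarith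
  have hv₁ : v < 1 := by linarith [pi_lt_four]
  have hcos : 0 < cos x := cos_pos_of_mem_Ioo ⟨by linarith [pi_pos], by linarith⟩
  -- the tangent-line bound is equivalent to `(1 - v) tan v < v`
  have hkey : (1 - v) * sin v < v * cos v := by
    nlinarith [mul_lt_mul_of_pos_left (sin_lt hv₀) (by linarith : (0 : ℝ) < 1 - v),
      mul_lt_mul_of_pos_left (one_sub_sq_div_two_lt_cos hv₀.ne') hv₀]
  have hsin_x : sin x = √2 / 2 * (cos v - sin v) := by
    rw [show x = π / 4 - v by ring, sin_sub, sin_pi_div_four, cos_pi_div_four]; ring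
  have hcos_x : cos x = √2 / 2 * (cos v + sin v) := by
    rw [show x = π / 4 - v by ring, cos_sub, sin_pi_div_four, cos_pi_div_four]; ring
  rw [tan_eq_sin_div_cos, lt_div_iff₀ hcos, hsin_x, hcos_x]
  nlinarith [mul_pos (by positivity : (0 : ℝ) < √2) (sub_pos.2 hkey)]

lemma two_mul_div_pi_sub_two_mul_lt_tan {x : ℝ} (hx₀ : 0 < x) (hx : x < π / 4) :
    2 * x / (π - 2 * x) < tan x := by
  have hd : 0 < π - 2 * x := by linarith [pi_pos]
  rcases le_or_gt x ((π - 2) / 2) with hsmall | hlarge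
  · calc 2 * x / (π - 2 * x) ≤ x := by rw [div_le_iff₀ hd]; nlinarith
      _ < tan x := lt_tan hx₀ (by linarith)
  · calc 2 * x / (π - 2 * x) ≤ 1 + 2 * (x - π / 4) := by
          rw [div_le_iff₀ hd]; nlinarith [pi_lt_four]
      _ < tan x := one_add_two_mul_sub_pi_div_four_lt_tan hx₀ hx

end Real

lemma two_mul_div_pi_sub_two_mul_eq_div_one_sub (θ : ℝ) :
    2 * (π / 2 * θ) / (π - 2 * (π / 2 * θ)) = θ / (1 - θ) := by
  rw [show π - 2 * (π / 2 * θ) = π * (1 - θ) by ring, show 2 * (π / 2 * θ) = π * θ by ring,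
    mul_div_mul_left _ _ pi_ne_zero]

lemma div_one_sub_lt_tan_pi_div_two_mul {θ : ℝ} (hθ₀ : 0 < θ) (hθ : θ < 1 / 2) :
    θ / (1 - θ) < tan (π / 2 * θ) := by
  rw [← two_mul_div_pi_sub_two_mul_eq_div_one_sub]
  exact two_mul_div_pi_sub_two_mul_lt_tan (by positivity) (by nlinarith [pi_pos])

lemma tan_pi_div_two_mul_lt_pi_div_two_mul_div_one_sub {θ : ℝ} (hθ₀ : 0 < θ) (hθ : θ ≤ 1 / 2) :
    tan (π / 2 * θ) < π / 2 * (θ / (1 - θ)) := by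
  rw [← two_mul_div_pi_sub_two_mul_eq_div_one_sub, ← mul_div_assoc, ← mul_assoc,
    div_mul_cancel₀ _ two_ne_zero]
  exact tan_lt_pi_mul_div_pi_sub_two_mul (by positivity) (by nlinarith [pi_pos])

/-- Lemma 2: φ(θ) = θ/(1−θ) globally approximates tan((π/2)θ) up to a factor
between 2/π and π/2. -/
theorem stmt_1 (φ : ℝ → ℝ) (hφ : ∀ θ, φ θ = θ / (1 - θ)) :
    (∀ θ : ℝ, 0 < θ → θ ≤ 1/2 →
      φ θ ≤ Real.tan (π/2 * θ) ∧ Real.tan (π/2 * θ) < π/2 * φ θ) ∧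
    (∀ θ : ℝ, 1/2 < θ → θ < 1 →
      2/π * φ θ < Real.tan (π/2 * θ) ∧ Real.tan (π/2 * θ) < φ θ) := by
  simp only [hφ]
  refine ⟨fun θ hθ₀ hθ => ⟨?_, tan_pi_div_two_mul_lt_pi_div_two_mul_div_one_sub hθ₀ hθ⟩,
    fun θ hθ hθ₁ => ?_⟩
  · rcases hθ.lt_or_eq with hlt | rfl
    · exact (div_one_sub_lt_tan_pi_div_two_mul hθ₀ hlt).le
    · norm_num [show π / 2 * (1 / 2) = π / 4 by ring, tan_pi_div_four]
  · have hs₀ : 0 < 1 - θ := by linarith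
    have hs : 1 - θ < 1 / 2 := by linarith
    have htan : tan (π / 2 * θ) = (tan (π / 2 * (1 - θ)))⁻¹ := by
      rw [← tan_pi_div_two_sub]; ring_nf
    have hφ_inv : θ / (1 - θ) = ((1 - θ) / (1 - (1 - θ)))⁻¹ := by rw [sub_sub_cancel, inv_div]
    have hφ_pos : 0 < (1 - θ) / (1 - (1 - θ)) := div_pos hs₀ (by linarith)
    have htan_pos : 0 < tan (π / 2 * (1 - θ)) :=
      tan_pos_of_pos_of_lt_pi_div_two (by positivity) (by nlinarith [pi_pos])
    rw [htan, hφ_inv]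
    constructor
    · rw [show 2 / π = (π / 2)⁻¹ by rw [inv_div], ← mul_inv,
        inv_lt_inv₀ (mul_pos (by positivity) hφ_pos) htan_pos]
      exact tan_pi_div_two_mul_lt_pi_div_two_mul_div_one_sub hs₀ hs.le
    · rw [inv_lt_inv₀ htan_pos hφ_pos]
      exact div_one_sub_lt_tan_pi_div_two_mul hs₀ hs
end

section
/- The function h defined on the open interval (0,1) by h(θ) = tan((π/2)·θ)·(1−θ)/θ is monotone nonincreasing on (0,1): for all θ₁, θ₂ with 0 < θ₁ ≤ θ₂ < 1, h(θ₂) ≤ h(θ₁). -/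
open Real

/-! Writing `u = (π/2) θ`, the derivative of `tan u · (1 - θ) / θ` is
`(π θ (1 - θ) - sin (π θ)) / (2 θ² cos² u)`, so the claim reduces to the elementary bound
`x (π - x) / π ≤ sin x` on `[0, π]` at `x = π θ`. By the symmetry `x ↦ π - x` it suffices to
prove that bound on `[0, π/2]`, where it follows from `x - x³/6 ≤ sin x` since `π x ≤ π²/2 < 6`. -/

namespace Real

lemma mul_pi_sub_div_pi_le_sin_of_le_pi_div_two {x : ℝ} (hx₀ : 0 ≤ x) (hx : x ≤ π / 2) :
    x * (π - x) / π ≤ sin x := by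
  have hπx : π * x ≤ 6 := by nlinarith [pi_lt_d2, pi_pos]
  have hcube : x ^ 3 / 6 ≤ x ^ 2 / π := by
    rw [div_le_div_iff₀ (by norm_num) pi_pos]
    nlinarith [sq_nonneg x]
  calc x * (π - x) / π = x - x ^ 2 / π := by field_simp
    _ ≤ x - x ^ 3 / 6 := by linarith
    _ ≤ sin x := sin_ge_sub_cube hx₀

lemma mul_pi_sub_div_pi_le_sin {x : ℝ} (hx₀ : 0 ≤ x) (hx : x ≤ π) :
    x * (π - x) / π ≤ sin x := by
  rcases le_total x (π / 2) with hx' | hx'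
  · exact mul_pi_sub_div_pi_le_sin_of_le_pi_div_two hx₀ hx'
  · have := mul_pi_sub_div_pi_le_sin_of_le_pi_div_two (x := π - x) (by linarith) (by linarith)
    rwa [sin_pi_sub, sub_sub_cancel, mul_comm] at this

lemma cos_pi_div_two_mul_pos {θ : ℝ} (hθ₀ : 0 < θ) (hθ₁ : θ < 1) : 0 < cos (π / 2 * θ) :=
  cos_pos_of_mem_Ioo ⟨by nlinarith [pi_pos], by nlinarith [pi_pos]⟩

lemma hasDerivAt_tan_mul_one_sub_div {θ : ℝ} (hθ₀ : 0 < θ) (hθ₁ : θ < 1) :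
    HasDerivAt (fun t => tan (π / 2 * t) * (1 - t) / t)
      ((π * θ * (1 - θ) - sin (π * θ)) / (2 * θ ^ 2 * cos (π / 2 * θ) ^ 2)) θ := by
  have hcos := (cos_pi_div_two_mul_pos hθ₀ hθ₁).ne'
  have htan : HasDerivAt (fun t => tan (π / 2 * t)) (1 / cos (π / 2 * θ) ^ 2 * (π / 2 * 1)) θ :=
    (hasDerivAt_tan hcos).comp θ ((hasDerivAt_id θ).const_mul (π / 2))
  refine ((htan.mul ((hasDerivAt_id' θ).const_sub 1)).div (hasDerivAt_id' θ) hθ₀.ne').congr_deriv ?_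
  simp only [Pi.mul_apply]
  rw [show π * θ = 2 * (π / 2 * θ) by ring, sin_two_mul, tan_eq_sin_div_cos]
  field_simp
  ring

lemma antitoneOn_tan_mul_one_sub_div :
    AntitoneOn (fun θ => tan (π / 2 * θ) * (1 - θ) / θ) (Set.Ioo 0 1) := by
  have hderiv := fun θ (hθ : θ ∈ Set.Ioo (0 : ℝ) 1) => hasDerivAt_tan_mul_one_sub_div hθ.1 hθ.2
  refine antitoneOn_of_hasDerivWithinAt_nonpos (f' := fun θ =>
      (π * θ * (1 - θ) - sin (π * θ)) / (2 * θ ^ 2 * cos (π / 2 * θ) ^ 2)) (convex_Ioo 0 1)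
    (fun θ hθ => (hderiv θ hθ).continuousAt.continuousWithinAt) ?_ ?_ <;> rw [interior_Ioo]
  · exact fun θ hθ => (hderiv θ hθ).hasDerivWithinAt
  intro θ hθ
  have hsin := mul_pi_sub_div_pi_le_sin (x := π * θ) (by nlinarith [pi_pos, hθ.1])
    (by nlinarith [pi_pos, hθ.2])
  have hnum : π * θ * (1 - θ) - sin (π * θ) ≤ 0 := by
    rw [show π * θ * (π - π * θ) / π = π * θ * (1 - θ) by field_simp] at hsin
    linarith
  exact div_nonpos_of_nonpos_of_nonneg hnum (by positivity)

end Real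

/-- h(θ) = tan((π/2)θ)·(1−θ)/θ is monotone nonincreasing on (0,1). -/
theorem stmt_2 (h : ℝ → ℝ) (hh : ∀ θ, h θ = Real.tan (π/2 * θ) * (1 - θ) / θ) :
    ∀ θ₁ θ₂ : ℝ, 0 < θ₁ → θ₁ ≤ θ₂ → θ₂ < 1 → h θ₂ ≤ h θ₁ := by
  intro θ₁ θ₂ hθ₁ h₁₂ hθ₂
  rw [hh θ₁, hh θ₂]
  exact antitoneOn_tan_mul_one_sub_div ⟨hθ₁, h₁₂.trans_lt hθ₂⟩ ⟨hθ₁.trans_le h₁₂, hθ₂⟩ h₁₂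
end

section
/- For every real θ with 0 ≤ θ < 1, the function l(θ) = (π/2)·θ·(1−θ)/cos²((π/2)·θ) − tan((π/2)·θ) satisfies l(θ) ≤ 0. -/
/-!
Clearing the positive denominator `cos² (π θ / 2)` and using `2 sin a cos a = sin 2a`, the claim
becomes `π θ (1 - θ) ≤ sin (π θ)`. This is symmetric under `θ ↦ 1 - θ`, and for `θ ≤ 1/2` it
follows from `x - x³/6 ≤ sin x`, because `π² θ ≤ π² / 2 ≤ 6`.
-/

open Real

lemma pi_mul_mul_one_sub_le_sin_pi_mul_of_le_half {θ : ℝ} (h0 : 0 ≤ θ) (h1 : θ ≤ 1 / 2) :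
    π * θ * (1 - θ) ≤ sin (π * θ) := by
  have hcube : π * θ - (π * θ) ^ 3 / 6 ≤ sin (π * θ) := sin_ge_sub_cube (by positivity)
  have hpi_sq : π ^ 2 * θ ≤ 6 := by nlinarith [pi_pos, pi_lt_d2]
  nlinarith [mul_nonneg (mul_nonneg pi_pos.le (sq_nonneg θ)) (sub_nonneg.2 hpi_sq)]

lemma pi_mul_mul_one_sub_le_sin_pi_mul {θ : ℝ} (h0 : 0 ≤ θ) (h1 : θ ≤ 1) :
    π * θ * (1 - θ) ≤ sin (π * θ) := by
  rcases le_total θ (1 / 2) with hθ | hθ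
  · exact pi_mul_mul_one_sub_le_sin_pi_mul_of_le_half h0 hθ
  · have h := pi_mul_mul_one_sub_le_sin_pi_mul_of_le_half (θ := 1 - θ) (by linarith) (by linarith)
    rw [mul_one_sub π θ, sin_pi_sub] at h
    linarith

/-- l(θ) = (π/2)·θ(1−θ)/cos²((π/2)θ) − tan((π/2)θ) is nonpositive on [0,1). -/
theorem stmt_5 (l : ℝ → ℝ)
    (hl : ∀ θ, l θ = π/2 * (θ * (1 - θ)) / Real.cos (π/2 * θ) ^ 2 - Real.tan (π/2 * θ)) :
    ∀ θ : ℝ, 0 ≤ θ → θ < 1 → l θ ≤ 0 := by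
  intro θ h0 h1
  have hcos : 0 < cos (π / 2 * θ) :=
    cos_pos_of_mem_Ioo ⟨by nlinarith [pi_pos], by nlinarith [pi_pos]⟩
  have hsin : π * θ * (1 - θ) ≤ 2 * sin (π / 2 * θ) * cos (π / 2 * θ) := by
    rw [← sin_two_mul, ← mul_assoc, mul_div_cancel₀ π two_ne_zero]
    exact pi_mul_mul_one_sub_le_sin_pi_mul h0 h1.le
  rw [hl, tan_eq_sin_div_cos, sub_nonpos, div_le_div_iff₀ (by positivity) hcos]
  nlinarith
end

section
/- The function l(θ) = (π/2)·θ·(1−θ)/cos²((π/2)·θ) − tan((π/2)·θ) is monotone nonincreasing on [0,1): for all θ₁, θ₂ with 0 ≤ θ₁ ≤ θ₂ < 1, l(θ₂) ≤ l(θ₁). -/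
open Real

/-!
Differentiating gives
`l'(θ) = π θ ((π/2)(1 - θ) sin((π/2)θ) - cos((π/2)θ)) / cos³((π/2)θ)`.
With `y = (π/2)(1 - θ) ∈ [0, π/2)` the bracket is `y cos y - sin y`, which is `≤ 0` because
`y ≤ tan y`.
-/

lemma mul_cos_le_sin {y : ℝ} (h0 : 0 ≤ y) (h1 : y < π / 2) : y * cos y ≤ sin y := by
  have hc : 0 < cos y := cos_pos_of_mem_Ioo ⟨by linarith [pi_pos], h1⟩
  have h := le_tan h0 h1
  rwa [tan_eq_sin_div_cos, le_div_iff₀ hc] at h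

lemma pi_div_two_mul_one_sub_mul_sin_le_cos {θ : ℝ} (h0 : 0 < θ) (h1 : θ ≤ 1) :
    π / 2 * (1 - θ) * sin (π / 2 * θ) ≤ cos (π / 2 * θ) := by
  have h := mul_cos_le_sin (y := π / 2 * (1 - θ)) (by nlinarith [pi_pos]) (by nlinarith [pi_pos])
  rwa [mul_one_sub, cos_pi_div_two_sub, sin_pi_div_two_sub, ← mul_one_sub] at h

lemma cos_pi_div_two_mul_pos {θ : ℝ} (h0 : -1 < θ) (h1 : θ < 1) : 0 < cos (π / 2 * θ) :=
  cos_pos_of_mem_Ioo ⟨by nlinarith [pi_pos], by nlinarith [pi_pos]⟩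

lemma hasDerivAt_l {θ : ℝ} (hc : cos (π / 2 * θ) ≠ 0) :
    HasDerivAt (fun θ => π / 2 * (θ * (1 - θ)) / cos (π / 2 * θ) ^ 2 - tan (π / 2 * θ))
      (π * θ * (π / 2 * (1 - θ) * sin (π / 2 * θ) - cos (π / 2 * θ)) / cos (π / 2 * θ) ^ 3) θ := by
  have hlin : HasDerivAt (fun θ : ℝ => π / 2 * θ) (π / 2) θ :=
    ((hasDerivAt_id' θ).const_mul (π / 2)).congr_deriv (mul_one _)
  have hnum : HasDerivAt (fun θ : ℝ => π / 2 * (θ * (1 - θ))) (π / 2 * (1 - 2 * θ)) θ :=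
    (((hasDerivAt_id' θ).mul ((hasDerivAt_const θ 1).sub (hasDerivAt_id' θ))).const_mul
      (π / 2)).congr_deriv (by simp only [Pi.sub_apply]; ring)
  have hden := ((hasDerivAt_cos (π / 2 * θ)).comp θ hlin).pow 2
  have htan := (hasDerivAt_tan hc).comp θ hlin
  refine ((hnum.div hden (pow_ne_zero 2 hc)).sub htan).congr_deriv ?_
  simp only [Function.comp_apply, Pi.pow_apply, Nat.cast_ofNat, Nat.reduceSub, pow_one]
  field_simp
  ring

theorem antitoneOn_l :
    AntitoneOn (fun θ => π / 2 * (θ * (1 - θ)) / cos (π / 2 * θ) ^ 2 - tan (π / 2 * θ))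
      (Set.Ico 0 1) := by
  have hcos : ∀ θ ∈ Set.Ico (0 : ℝ) 1, 0 < cos (π / 2 * θ) := fun θ hθ =>
    cos_pi_div_two_mul_pos (by linarith [hθ.1]) hθ.2
  refine antitoneOn_of_hasDerivWithinAt_nonpos (convex_Ico 0 1)
    (fun θ hθ => (hasDerivAt_l (hcos θ hθ).ne').continuousAt.continuousWithinAt)
    (fun θ hθ => (hasDerivAt_l (hcos θ (interior_subset hθ)).ne').hasDerivWithinAt)
    (fun θ hθ => ?_)
  rw [interior_Ico] at hθ
  obtain ⟨h0, h1⟩ := hθ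
  have hc := hcos θ ⟨h0.le, h1⟩
  have hbracket := pi_div_two_mul_one_sub_mul_sin_le_cos h0 h1.le
  exact div_nonpos_of_nonpos_of_nonneg
    (mul_nonpos_of_nonneg_of_nonpos (by positivity) (by linarith)) (by positivity)

/-- l(θ) = (π/2)·θ(1−θ)/cos²((π/2)θ) − tan((π/2)θ) is monotone nonincreasing on [0,1). -/
theorem stmt_6 (l : ℝ → ℝ)
    (hl : ∀ θ, l θ = π/2 * (θ * (1 - θ)) / Real.cos (π/2 * θ) ^ 2 - Real.tan (π/2 * θ)) :
    ∀ θ₁ θ₂ : ℝ, 0 ≤ θ₁ → θ₁ ≤ θ₂ → θ₂ < 1 → l θ₂ ≤ l θ₁ := by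
  obtain rfl : l = _ := funext hl
  intro θ₁ θ₂ h0 h12 h2
  exact antitoneOn_l ⟨h0, h12.trans_lt h2⟩ ⟨h0.trans h12, h2⟩ h12
end

section
/- Let E be a real inner product space and a, b ∈ E with a ≠ 0 and ‖a − b‖ ≤ ‖b‖. Then the (undirected) angle between a and b satisfies ∠(a,b) ≤ arcsin(‖a − b‖/‖b‖). -/
open Real RealInnerProductSpace

/-!
The distance from `y` to the line through `x` is `‖y‖ sin ∠(x, y)`, so it is at most `‖x - y‖`;
algebraically, `‖x‖²‖x - y‖² - (‖x‖²‖y‖² - ⟪x, y⟫²) = (‖x‖² - ⟪x, y⟫)²`.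
If moreover `‖x - y‖ ≤ ‖y‖`, then `‖x‖² ≤ 2⟪x, y⟫`, so the angle is acute and the sine bound
can be inverted by `arcsin`.
-/

namespace InnerProductGeometry

variable {V : Type*} [NormedAddCommGroup V] [InnerProductSpace ℝ V]

theorem sin_angle_mul_norm_le_norm_sub (x y : V) : sin (angle x y) * ‖y‖ ≤ ‖x - y‖ := by
  rcases eq_or_ne x 0 with rfl | hx
  · simp
  have hx' : 0 < ‖x‖ := norm_pos_iff.2 hx
  refine le_of_mul_le_mul_right ?_ hx'
  have hsin := sin_angle_mul_norm_mul_norm x y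
  rw [real_inner_self_eq_norm_sq, real_inner_self_eq_norm_sq] at hsin
  have hsub := norm_sub_sq_real x y
  calc sin (angle x y) * ‖y‖ * ‖x‖
      = √(‖x‖ ^ 2 * ‖y‖ ^ 2 - ⟪x, y⟫ * ⟪x, y⟫) := by rw [← hsin]; ring
    _ ≤ ‖x - y‖ * ‖x‖ := by
      refine Real.sqrt_le_iff.2 ⟨by positivity, ?_⟩
      nlinarith [sq_nonneg (‖x‖ ^ 2 - ⟪x, y⟫)]

theorem real_inner_nonneg_of_norm_sub_le {x y : V} (h : ‖x - y‖ ≤ ‖y‖) : 0 ≤ ⟪x, y⟫ := by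
  have hsq : ‖x - y‖ ^ 2 ≤ ‖y‖ ^ 2 := pow_le_pow_left₀ (norm_nonneg _) h 2
  nlinarith [norm_sub_sq_real x y, sq_nonneg ‖x‖]

theorem angle_le_pi_div_two_of_inner_nonneg {x y : V} (h : 0 ≤ ⟪x, y⟫) : angle x y ≤ π / 2 :=
  Real.arccos_le_pi_div_two.2 (div_nonneg h (by positivity))

end InnerProductGeometry

/-- If a ≠ 0 and ‖a − b‖ ≤ ‖b‖ in a real inner product space, then the angle
between a and b is at most arcsin(‖a − b‖/‖b‖). -/
theorem stmt_7 {E : Type*} [NormedAddCommGroup E] [InnerProductSpace ℝ E]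
    (a b : E) (ha : a ≠ 0) (hab : ‖a - b‖ ≤ ‖b‖) :
    InnerProductGeometry.angle a b ≤ Real.arcsin (‖a - b‖ / ‖b‖) := by
  have hb : 0 < ‖b‖ := by
    refine norm_pos_iff.2 fun hb ↦ ha ?_
    simpa [hb] using hab
  have hacute : InnerProductGeometry.angle a b ≤ π / 2 :=
    InnerProductGeometry.angle_le_pi_div_two_of_inner_nonneg
      (InnerProductGeometry.real_inner_nonneg_of_norm_sub_le hab)
  have hpos : -(π / 2) < InnerProductGeometry.angle a b := by
    linarith [InnerProductGeometry.angle_nonneg a b, pi_pos]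
  rw [le_arcsin_iff_sin_le' ⟨hpos, hacute⟩, le_div_iff₀ hb]
  exact InnerProductGeometry.sin_angle_mul_norm_le_norm_sub a b
end

section
/- Let α > 0, β ≥ 0, B > 0, and r ≥ 1 be reals, and define Π(θ) = 1 − (α/θ)·(β + B·√(2·log(r·θ/α))) for θ > 0. Then for every θ > 0 with 2·log(r·θ/α) ≥ 2, the second derivative of Π at θ equals −(α/θ³)·(2β + 2B·ζ^{1/2} − 3B·ζ^{−1/2} − B·ζ^{−3/2}) with ζ = 2·log(r·θ/α), and this second derivative is strictly negative. -/
/-! Write `s(t) = √(2 log(r t / α))`. Since `s² = 2 log(r t / α)`, the function `s` solves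
`s' = 1 / (t s)`, and this relation alone lets one differentiate `Π = 1 - (α / t)(β + B s)` twice
in closed form. The sign of `Π''` is that of `-(2β s³ + 2B s⁴ - 3B s² - B)`, and the quartic
`2s⁴ - 3s² - 1` is positive once `s² ≥ 2`. -/

open Real Filter Topology

theorem hasDerivAt_sqrt_two_mul_log_mul_div {r α x : ℝ} (hx : 0 < log (r * x / α)) :
    HasDerivAt (fun t => √(2 * log (r * t / α))) (1 / (x * √(2 * log (r * x / α)))) x := by
  have hrxα : r * x / α ≠ 0 := fun h => by simp [h] at hx
  have hr : r ≠ 0 := by rintro rfl; simp at hrxα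
  have hα : α ≠ 0 := by rintro rfl; simp at hrxα
  have hlin : HasDerivAt (fun t => r * t / α) (r / α) x := by
    simpa using ((hasDerivAt_id x).const_mul r).div_const α
  have hsqrt := ((hlin.log hrxα).const_mul 2).sqrt (by positivity)
  refine hsqrt.congr_deriv ?_
  have : √(2 * log (r * x / α)) ≠ 0 := (sqrt_pos.2 (by positivity)).ne'
  field_simp

section

variable {s : ℝ → ℝ} {α β B x : ℝ}

theorem hasDerivAt_one_sub_div_mul_of_hasDerivAt (hs : HasDerivAt s (1 / (x * s x)) x)
    (hx : x ≠ 0) (hsx : s x ≠ 0) :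
    HasDerivAt (fun t => 1 - α / t * (β + B * s t)) (α / x ^ 2 * (β + B * s x - B / s x)) x := by
  have hinv : HasDerivAt (fun t => α / t) (-(α / x ^ 2)) x := by
    simpa [div_eq_mul_inv, sq] using (hasDerivAt_inv hx).const_mul α
  refine ((hasDerivAt_const x 1).sub (hinv.mul ((hs.const_mul B).const_add β))).congr_deriv ?_
  field_simp
  ring

theorem hasDerivAt_div_sq_mul_of_hasDerivAt (hs : HasDerivAt s (1 / (x * s x)) x)
    (hx : x ≠ 0) (hsx : s x ≠ 0) :
    HasDerivAt (fun t => α / t ^ 2 * (β + B * s t - B / s t))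
      (-(α / x ^ 3) * (2 * β + 2 * B * s x - 3 * B / s x - B / s x ^ 3)) x := by
  have hinv_sq : HasDerivAt (fun t => α / t ^ 2) (α * (-(2 * x) / (x ^ 2) ^ 2)) x := by
    simpa [div_eq_mul_inv] using ((hasDerivAt_pow 2 x).inv (pow_ne_zero 2 hx)).const_mul α
  have hbracket : HasDerivAt (fun t => β + B * s t - B / s t)
      (B * (1 / (x * s x)) - (0 * s x - B * (1 / (x * s x))) / s x ^ 2) x :=
    ((hs.const_mul B).const_add β).sub ((hasDerivAt_const x B).div hs hsx)
  refine (hinv_sq.mul hbracket).congr_deriv ?_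
  field_simp
  ring

end

theorem two_mul_add_two_mul_mul_sub_pos {β B s : ℝ} (hβ : 0 ≤ β) (hB : 0 < B) (hs : 0 < s)
    (hs2 : 2 ≤ s ^ 2) : 0 < 2 * β + 2 * B * s - 3 * B / s - B / s ^ 3 := by
  have hquartic : 0 < 2 * s ^ 4 - 3 * s ^ 2 - 1 := by nlinarith
  have hexpand : 2 * β + 2 * B * s - 3 * B / s - B / s ^ 3
      = 2 * β + B * (2 * s ^ 4 - 3 * s ^ 2 - 1) / s ^ 3 := by
    field_simp
    ring
  rw [hexpand]
  positivity

theorem stmt_13_general (α β B r : ℝ) (hα : 0 < α) (hβ : 0 ≤ β) (hB : 0 < B)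
    (Pibd : ℝ → ℝ)
    (hPibd : ∀ θ : ℝ, 0 < θ →
      Pibd θ = 1 - α / θ * (β + B * Real.sqrt (2 * Real.log (r * θ / α))))
    (θ : ℝ) (hθ : 0 < θ) (hζ : 2 ≤ 2 * Real.log (r * θ / α)) :
    deriv (deriv Pibd) θ =
      -(α / θ ^ 3) * (2 * β + 2 * B * Real.sqrt (2 * Real.log (r * θ / α))
        - 3 * B / Real.sqrt (2 * Real.log (r * θ / α))
        - B / Real.sqrt (2 * Real.log (r * θ / α)) ^ 3) ∧
    deriv (deriv Pibd) θ < 0 := by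
  set s := fun t => √(2 * log (r * t / α))
  have hlog : 0 < log (r * θ / α) := by linarith
  have hlog_near : ∀ᶠ t in 𝓝 θ, 0 < t ∧ 0 < log (r * t / α) := by
    have hcont : ContinuousAt (fun t => log (r * t / α)) θ :=
      (by fun_prop : ContinuousAt (fun t => r * t / α) θ).log (fun h => by simp [h] at hlog)
    exact (eventually_gt_nhds hθ).and (hcont.eventually (eventually_gt_nhds hlog))
  have hs_ne {t : ℝ} (ht : 0 < log (r * t / α)) : s t ≠ 0 := (sqrt_pos.2 (by positivity)).ne'
  have hderiv : deriv Pibd =ᶠ[𝓝 θ] fun t => α / t ^ 2 * (β + B * s t - B / s t) := by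
    have hPibd_near : Pibd =ᶠ[𝓝 θ] fun t => 1 - α / t * (β + B * s t) :=
      (eventually_gt_nhds hθ).mono hPibd
    filter_upwards [hPibd_near.deriv, hlog_near] with t ht ⟨htpos, htlog⟩
    rw [ht]
    exact (hasDerivAt_one_sub_div_mul_of_hasDerivAt
      (hasDerivAt_sqrt_two_mul_log_mul_div htlog) htpos.ne' (hs_ne htlog)).deriv
  have hsecond : deriv (deriv Pibd) θ = _ := hderiv.deriv_eq.trans
    (hasDerivAt_div_sq_mul_of_hasDerivAt
      (hasDerivAt_sqrt_two_mul_log_mul_div hlog) hθ.ne' (hs_ne hlog)).deriv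
  refine ⟨hsecond, ?_⟩
  rw [hsecond, neg_mul, neg_lt_zero]
  refine mul_pos (by positivity) (two_mul_add_two_mul_mul_sub_pos hβ hB
    (sqrt_pos.2 (by positivity)) ?_)
  rwa [sq_sqrt (by positivity)]

/-- Second derivative of Π(θ) = 1 − (α/θ)(β + B√(2 log(rθ/α))): for θ > 0 with
ζ = 2 log(rθ/α) ≥ 2, Π″(θ) = −(α/θ³)(2β + 2B·ζ^{1/2} − 3B·ζ^{−1/2} − B·ζ^{−3/2}) < 0. -/
theorem stmt_13 (α β B r : ℝ) (hα : 0 < α) (hβ : 0 ≤ β) (hB : 0 < B) (hr : 1 ≤ r)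
    (Pibd : ℝ → ℝ)
    (hPibd : ∀ θ : ℝ, 0 < θ →
      Pibd θ = 1 - α / θ * (β + B * Real.sqrt (2 * Real.log (r * θ / α))))
    (θ : ℝ) (hθ : 0 < θ) (hζ : 2 ≤ 2 * Real.log (r * θ / α)) :
    deriv (deriv Pibd) θ =
      -(α / θ ^ 3) * (2 * β + 2 * B * Real.sqrt (2 * Real.log (r * θ / α))
        - 3 * B / Real.sqrt (2 * Real.log (r * θ / α))
        - B / Real.sqrt (2 * Real.log (r * θ / α)) ^ 3) ∧
    deriv (deriv Pibd) θ < 0 :=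
  stmt_13_general α β B r hα hβ hB Pibd hPibd θ hθ hζ
end

section
/- Let E be a real inner product space, ψ ∈ ℝ with sin ψ ≠ 0, and w, w′ ∈ E unit vectors with ⟨w, w′⟩ = cos ψ. Let θ₁, θ₂ ∈ ℝ with θ₁ + θ₂ = ψ, and set α = (sin θ₁ + sin θ₂·cos ψ)/(1 − cos²ψ), β = −(sin θ₂ + sin θ₁·cos ψ)/(1 − cos²ψ), and m = α·w + β·w′. Then ⟨m, w⟩ = sin θ₁ = cos(π/2 − θ₁), ⟨m, w′⟩ = −sin θ₂ = cos(π/2 + θ₂), and ‖m‖ = 1. -/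
open Real
open scoped RealInnerProductSpace

/-- The normal vector m = α·w + β·w′ of the 1vs1adjuster decision boundary is a unit
vector making angle π/2 − θ₁ with w and π/2 + θ₂ with w′. -/
theorem stmt_16 {E : Type*} [NormedAddCommGroup E] [InnerProductSpace ℝ E]
    (ψ : ℝ) (hψ : Real.sin ψ ≠ 0)
    (w w' : E) (hw : ‖w‖ = 1) (hw' : ‖w'‖ = 1) (hww' : ⟪w, w'⟫ = Real.cos ψ)
    (θ₁ θ₂ : ℝ) (hθ : θ₁ + θ₂ = ψ)
    (α β : ℝ)
    (hα : α = (Real.sin θ₁ + Real.sin θ₂ * Real.cos ψ) / (1 - Real.cos ψ ^ 2))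
    (hβ : β = -((Real.sin θ₂ + Real.sin θ₁ * Real.cos ψ) / (1 - Real.cos ψ ^ 2)))
    (m : E) (hm : m = α • w + β • w') :
    ⟪m, w⟫ = Real.sin θ₁ ∧ Real.sin θ₁ = Real.cos (π/2 - θ₁) ∧
    ⟪m, w'⟫ = -Real.sin θ₂ ∧ -Real.sin θ₂ = Real.cos (π/2 + θ₂) ∧
    ‖m‖ = 1 := by
  subst hθ
  have hs : Real.sin (θ₁ + θ₂) ^ 2 = 1 - Real.cos (θ₁ + θ₂) ^ 2 := Real.sin_sq _
  have hd : (1 : ℝ) - Real.cos (θ₁ + θ₂) ^ 2 ≠ 0 := by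
    rw [← hs]; exact pow_ne_zero 2 hψ
  have hww : ⟪w, w⟫ = (1 : ℝ) := by
    rw [real_inner_self_eq_norm_sq, hw]; norm_num
  have hw'w' : ⟪w', w'⟫ = (1 : ℝ) := by
    rw [real_inner_self_eq_norm_sq, hw']; norm_num
  have hw'w : ⟪w', w⟫ = Real.cos (θ₁ + θ₂) := by
    rw [real_inner_comm]; exact hww'
  have h1 : ⟪m, w⟫ = Real.sin θ₁ := by
    rw [hm, inner_add_left, real_inner_smul_left, real_inner_smul_left, hww, hw'w, hα, hβ]
    field_simp
    rw [← hs, Real.sin_add, Real.cos_add]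
    linear_combination (-Real.sin θ₁) * Real.sin_sq_add_cos_sq θ₁ +
      (-Real.sin θ₁ * (Real.sin θ₁ ^ 2 + Real.cos θ₁ ^ 2)) * Real.sin_sq_add_cos_sq θ₂
  have h2 : ⟪m, w'⟫ = -Real.sin θ₂ := by
    rw [hm, inner_add_left, real_inner_smul_left, real_inner_smul_left, hw'w', hww', hα, hβ]
    field_simp
    rw [← hs, Real.sin_add, Real.cos_add]
    linear_combination (Real.sin θ₂ * (Real.sin θ₂ ^ 2 + Real.cos θ₂ ^ 2)) * Real.sin_sq_add_cos_sq θ₁ +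
      Real.sin θ₂ * Real.sin_sq_add_cos_sq θ₂
  refine ⟨h1, by rw [Real.cos_pi_div_two_sub], h2, by simp [Real.cos_add], ?_⟩
  have hmm : ⟪m, m⟫ = (1 : ℝ) := by
    have e : ⟪m, m⟫ = α * ⟪m, w⟫ + β * ⟪m, w'⟫ := by
      nth_rewrite 1 [hm]
      rw [inner_add_left, real_inner_smul_left, real_inner_smul_left,
        real_inner_comm w m, real_inner_comm w' m]
    rw [e, h1, h2, hα, hβ]
    field_simp
    rw [← hs, Real.sin_add, Real.cos_add]
    linear_combination (Real.sin θ₂ ^ 4 + Real.sin θ₂ ^ 2 * Real.cos θ₂ ^ 2 - 2 * Real.sin θ₂ ^ 2) *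
        Real.sin_sq_add_cos_sq θ₁ +
      (-Real.sin θ₁ ^ 2 - Real.sin θ₁ ^ 2 * Real.sin θ₂ ^ 2 - Real.sin θ₂ ^ 2 * Real.cos θ₁ ^ 2 +
        Real.sin θ₂ ^ 2) * Real.sin_sq_add_cos_sq θ₂
  have : ‖m‖ ^ 2 = 1 := by rw [← real_inner_self_eq_norm_sq] at *; simpa using hmm
  nlinarith [norm_nonneg m]
end

section
/- Let ψ, F, γ ∈ ℝ with F > 0 and sin(ψ/2) ≠ 0, and let n_k, n_{k′} > 0. Set c = γ·log(n_k/n_{k′})/(2·F·sin(ψ/2)) and assume |c| ≤ 1. Then θ = ψ/2 − arcsin(c) satisfies F·cos θ − γ·log n_k = F·cos(ψ − θ) − γ·log n_{k′}. -/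
open Real

/-- The ALA decision-boundary angle: with c = γ·log(n_k/n_{k′})/(2F·sin(ψ/2)) and
|c| ≤ 1, the angle θ = ψ/2 − arcsin c equalizes the additively adjusted logits:
F·cos θ − γ·log n_k = F·cos(ψ − θ) − γ·log n_{k′}. -/
theorem stmt_19 (ψ F γ : ℝ) (hF : 0 < F) (hψ : Real.sin (ψ/2) ≠ 0)
    (nk nk' : ℝ) (hnk : 0 < nk) (hnk' : 0 < nk')
    (c : ℝ) (hc : c = γ * Real.log (nk / nk') / (2 * F * Real.sin (ψ/2)))
    (hc1 : |c| ≤ 1)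
    (θ : ℝ) (hθ : θ = ψ/2 - Real.arcsin c) :
    F * Real.cos θ - γ * Real.log nk = F * Real.cos (ψ - θ) - γ * Real.log nk' := by
  obtain ⟨h1, h2⟩ := abs_le.mp hc1
  have hsin : Real.sin (Real.arcsin c) = c := Real.sin_arcsin h1 h2
  have key : Real.cos θ - Real.cos (ψ - θ) = 2 * Real.sin (ψ/2) * c := by
    rw [Real.cos_sub_cos]
    have e1 : (θ + (ψ - θ)) / 2 = ψ / 2 := by ring
    have e2 : (θ - (ψ - θ)) / 2 = -(Real.arcsin c) := by rw [hθ]; ring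
    rw [e1, e2, Real.sin_neg, hsin]; ring
  have hlog : Real.log (nk / nk') = Real.log nk - Real.log nk' :=
    Real.log_div hnk.ne' hnk'.ne'
  have hc' : 2 * F * Real.sin (ψ/2) * c = γ * (Real.log nk - Real.log nk') := by
    rw [hc, ← hlog]
    field_simp
  nlinarith [key, hc']
end
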